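/- For ℚ⁺-exponent-strings p₁ and p₂ (all exponents positive rationals), there exists a minimum-cost exp-edit sequence from p₁ to p₂ consisting only of ℚ⁺-exponent-strings, with total cost equal to dist(p₁, p₂). Equivalently, the exp-edit distance between two ℚ⁺-exponent-strings taken over all ℝ⁺-exponent-string intermediate terms equals the infimum restricted to ℚ⁺-exponent-string intermediate terms. -/

import Mathlib

namespace ExpStr

variable {α S : Type*}

/-- Concatenation of exponent-string representations, merging the boundary
terms when the base characters coincide. -/
def eCat [DecidableEq α] (op : S → S → S) (p q : List (α × S)) : List (α × S) :=
  match p.getLast?, q with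
  | some (a, s), (b, t) :: q' =>
      if a = b then p.dropLast ++ (a, op s t) :: q' else p ++ q
  | _, _ => p ++ q

/-- The defining property of an `S`-exponent-string:
consecutive base characters differ. -/
def IsExp (l : List (α × S)) : Prop := l.Chain' (fun x y => x.1 ≠ y.1)

/-- The exponent-string corresponding to a representation. -/
def eRep [DecidableEq α] (op : S → S → S) : List (α × S) → List (α × S)
  | [] => []
  | x :: xs => eCat op [x] (eRep op xs)

end ExpStr

noncomputable section
namespace ExpStr
open MeasureTheory

variable {α : Type*}

/-- Length of an `ℝ⁺`-exponent-string: the sum of its exponents. -/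
def eLen (l : List (α × ℝ)) : ℝ := (l.map Prod.snd).sum

/-- `ℝ⁺`-exponent-strings: consecutive base characters differ and all
exponents are positive reals. -/
def RES (l : List (α × ℝ)) : Prop := IsExp l ∧ ∀ x ∈ l, 0 < x.2

/-- Concatenation of `ℝ⁺`-exponent-strings (exponents added at the boundary). -/
def rcat [DecidableEq α] (p q : List (α × ℝ)) : List (α × ℝ) :=
  eCat (· + ·) p q

/-- The `ℕ`-exponent-string (run-length encoding) corresponding to a word. -/
def ofWord [DecidableEq α] (w : List α) : List (α × ℝ) :=
  eRep (· + ·) (w.map fun a => (a, (1 : ℝ)))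

/-- Multiply every exponent by `k`. -/
def scaleE (k : ℝ) (l : List (α × ℝ)) : List (α × ℝ) :=
  l.map fun x => (x.1, k * x.2)

/-- The base character of the position `x` in an `ℝ⁺`-exponent-string. -/
def charAt [Inhabited α] : List (α × ℝ) → ℝ → α
  | [], _ => default
  | (a, s) :: t, x => if x < s then a else charAt t (x - s)

/-- A single exp-edit operation applied to an infix, with its cost:
insertion `λ → a^q`, deletion `a^q → λ`, or substitution `a^q → b^q`. -/
def Step [DecidableEq α] (wdel wins : α → ℝ) (wsub : α → α → ℝ)
    (u v : List (α × ℝ)) (c : ℝ) : Prop :=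
  ∃ p₁ p₂ : List (α × ℝ), RES p₁ ∧ RES p₂ ∧
    ((∃ a q, 0 < q ∧ u = rcat p₁ p₂ ∧ v = rcat p₁ (rcat [(a, q)] p₂) ∧
        c = q * wins a) ∨
     (∃ a q, 0 < q ∧ u = rcat p₁ (rcat [(a, q)] p₂) ∧ v = rcat p₁ p₂ ∧
        c = q * wdel a) ∨
     (∃ a b q, 0 < q ∧ u = rcat p₁ (rcat [(a, q)] p₂) ∧
        v = rcat p₁ (rcat [(b, q)] p₂) ∧ c = q * wsub a b))

/-- `EditCost wdel wins wsub u v c` holds iff there is a finite exp-edit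
sequence from `u` to `v` of total cost `c`. -/
inductive EditCost [DecidableEq α] (wdel wins : α → ℝ) (wsub : α → α → ℝ)
    (u : List (α × ℝ)) : List (α × ℝ) → ℝ → Prop
  | refl : EditCost wdel wins wsub u u 0
  | step {p q : List (α × ℝ)} {c c' : ℝ} :
      EditCost wdel wins wsub u p c → Step wdel wins wsub p q c' →
      EditCost wdel wins wsub u q (c + c')

/-- Exp-edit distance: the infimum cost of exp-edit sequences. -/
def eDist [DecidableEq α] (wdel wins : α → ℝ) (wsub : α → α → ℝ)
    (u v : List (α × ℝ)) : ℝ :=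
  sInf {c | EditCost wdel wins wsub u v c}

/-- Exp-edit sequences all of whose intermediate terms satisfy `P`. -/
inductive EditCostIn [DecidableEq α] (P : List (α × ℝ) → Prop)
    (wdel wins : α → ℝ) (wsub : α → α → ℝ)
    (u : List (α × ℝ)) : List (α × ℝ) → ℝ → Prop
  | refl : EditCostIn P wdel wins wsub u u 0
  | step {p q : List (α × ℝ)} {c c' : ℝ} :
      EditCostIn P wdel wins wsub u p c → Step wdel wins wsub p q c' → P q →
      EditCostIn P wdel wins wsub u q (c + c')

/-- All exponents are positive integers. -/
def IntExp (l : List (α × ℝ)) : Prop := ∀ x ∈ l, ∃ n : ℕ, x.2 = n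

/-- All exponents are (positive) rationals. -/
def RatExp (l : List (α × ℝ)) : Prop := ∀ x ∈ l, ∃ r : ℚ, x.2 = r

/-- A single classical string edit operation with its cost. -/
def SStep (wdel wins : α → ℝ) (wsub : α → α → ℝ) (u v : List α) (c : ℝ) : Prop :=
  ∃ p₁ p₂ : List α,
    ((∃ a, u = p₁ ++ p₂ ∧ v = p₁ ++ a :: p₂ ∧ c = wins a) ∨
     (∃ a, u = p₁ ++ a :: p₂ ∧ v = p₁ ++ p₂ ∧ c = wdel a) ∨
     (∃ a b, u = p₁ ++ a :: p₂ ∧ v = p₁ ++ b :: p₂ ∧ c = wsub a b))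

/-- Total costs of classical string edit sequences. -/
inductive SEditCost (wdel wins : α → ℝ) (wsub : α → α → ℝ) (u : List α) :
    List α → ℝ → Prop
  | refl : SEditCost wdel wins wsub u u 0
  | step {p q : List α} {c c' : ℝ} :
      SEditCost wdel wins wsub u p c → SStep wdel wins wsub p q c' →
      SEditCost wdel wins wsub u q (c + c')

/-- Classical string edit distance. -/
def sDist (wdel wins : α → ℝ) (wsub : α → α → ℝ) (u v : List α) : ℝ :=
  sInf {c | SEditCost wdel wins wsub u v c}

/-- X-projection of a diagonal segment `(x₀, y₀, t)`. -/
def mSegX (m : ℝ × ℝ × ℝ) : Set ℝ := Set.Ico m.1 (m.1 + m.2.2)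

/-- Y-projection of a diagonal segment `(x₀, y₀, t)`. -/
def mSegY (m : ℝ × ℝ × ℝ) : Set ℝ := Set.Ico m.2.1 (m.2.1 + m.2.2)

/-- X-projection of a matching. -/
def mEX (M : List (ℝ × ℝ × ℝ)) : Set ℝ := ⋃ m ∈ M, mSegX m

/-- Y-projection of a matching. -/
def mEY (M : List (ℝ × ℝ × ℝ)) : Set ℝ := ⋃ m ∈ M, mSegY m

/-- An exp-matching: a finite family of diagonal segments, each given as
`(x₀, y₀, t)` (start point and length parameter), lying in `[0,L₁)×[0,L₂)`,
with pairwise disjoint axis projections, and monotone. -/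
def IsMatching (L₁ L₂ : ℝ) (M : List (ℝ × ℝ × ℝ)) : Prop :=
  (∀ m ∈ M, 0 < m.2.2 ∧ 0 ≤ m.1 ∧ 0 ≤ m.2.1 ∧
      m.1 + m.2.2 ≤ L₁ ∧ m.2.1 + m.2.2 ≤ L₂) ∧
  M.Pairwise (fun m m' =>
      Disjoint (mSegX m) (mSegX m') ∧ Disjoint (mSegY m) (mSegY m')) ∧
  (∀ m ∈ M, ∀ m' ∈ M, ∀ s s' : ℝ, 0 ≤ s → s < m.2.2 → 0 ≤ s' → s' < m'.2.2 →
      m.1 + s < m'.1 + s' → m.2.1 + s ≤ m'.2.1 + s')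

/-- Cost of an exp-matching: deletion and insertion integrals over the
unmatched positions plus the substitution (arc-length) integral over the
segments (the factor `1/√2` cancels the speed `√2` of the parametrization). -/
def mCost [Inhabited α] (wdel wins : α → ℝ) (wsub : α → α → ℝ)
    (p₁ p₂ : List (α × ℝ)) (M : List (ℝ × ℝ × ℝ)) : ℝ :=
  (∫ x in Set.Ico 0 (eLen p₁) \ mEX M, wdel (charAt p₁ x)) +
  (∫ y in Set.Ico 0 (eLen p₂) \ mEY M, wins (charAt p₂ y)) +
  (M.map fun m => ∫ s in (0 : ℝ)..m.2.2,
      wsub (charAt p₁ (m.1 + s)) (charAt p₂ (m.2.1 + s))).sum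

end ExpStr
end

/-!
Let `N` be a common denominator of the exponents, so that `pᵢ` is the word `wᵢ = floorWord N pᵢ`
with every letter given exponent `1 / N`. Replacing each letter by a block of exponent `1 / N`
turns a string edit sequence from `w₁` to `w₂` into an exp-edit sequence through
`ℚ⁺`-exponent-strings of `1 / N` times its cost; an optimal one, of cost `lev w₁ w₂`, gives
the value `lev w₁ w₂ / N`.

Conversely, sampling an exp-edit sequence of cost `c` at resolution `1 / n` (an exponent `s`
becomes `⌊n s⌋` letters) costs, step by step, `n` times the exp-edit cost plus a rounding error at
the merged boundaries that does not depend on `n`: `lev (floorWord n p₁) (floorWord n p₂) ≤ n c + K`.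
For `n = m N` the sampled words are `w₁` and `w₂` with every letter repeated `m` times, and
interpolating the table of `lev w₁ w₂` linearly inside each `m × m` block shows that their distance
is at least `m · lev w₁ w₂`. Letting `m → ∞` gives `lev w₁ w₂ / N ≤ c`.
-/

theorem Nat.exists_floor_add_eq {R : Type*} [Field R] [LinearOrder R] [IsStrictOrderedRing R]
    [FloorSemiring R] {x y : R} (hx : 0 ≤ x) (hy : 0 ≤ y) :
    ∃ e ≤ 1, ⌊x + y⌋₊ = ⌊x⌋₊ + ⌊y⌋₊ + e := by
  have hle : ⌊x⌋₊ + ⌊y⌋₊ ≤ ⌊x + y⌋₊ := by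
    apply Nat.le_floor
    push_cast
    linarith [Nat.floor_le hx, Nat.floor_le hy]
  have hlt : ⌊x + y⌋₊ < ⌊x⌋₊ + ⌊y⌋₊ + 2 := by
    rw [Nat.floor_lt (add_nonneg hx hy)]
    push_cast
    linarith [Nat.lt_floor_add_one x, Nat.lt_floor_add_one y]
  exact ⟨⌊x + y⌋₊ - (⌊x⌋₊ + ⌊y⌋₊), by omega, by omega⟩

theorem le_of_forall_nat_mul_le_add {K : Type*} [Field K] [LinearOrder K] [IsStrictOrderedRing K]
    [Archimedean K] {a b C : K} (h : ∀ m : ℕ, m * a ≤ m * b + C) : a ≤ b := by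
  by_contra! hab
  obtain ⟨m, hm⟩ := exists_nat_gt (C / (a - b))
  rw [div_lt_iff₀ (sub_pos.2 hab)] at hm
  linarith [h m]

namespace ExpStr

variable {α : Type*}

section Rcat

variable [DecidableEq α]

@[simp]
theorem rcat_nil_left (q : List (α × ℝ)) : rcat [] q = q := by
  simp [rcat, eCat]

@[simp]
theorem rcat_nil_right (p : List (α × ℝ)) : rcat p [] = p := by
  cases h : p.getLast? <;> simp [rcat, eCat, h]

theorem rcat_append_singleton_cons (p q : List (α × ℝ)) (a b : α) (s t : ℝ) :
    rcat (p ++ [(a, s)]) ((b, t) :: q) =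
      if a = b then p ++ (a, s + t) :: q else p ++ (a, s) :: (b, t) :: q := by
  split_ifs with h <;> simp [rcat, eCat, h]

theorem rcat_singleton_cons (q : List (α × ℝ)) (a b : α) (s t : ℝ) :
    rcat [(a, s)] ((b, t) :: q) =
      if a = b then (a, s + t) :: q else (a, s) :: (b, t) :: q :=
  rcat_append_singleton_cons [] q a b s t

theorem rcat_eq_append_or (p q : List (α × ℝ)) :
    rcat p q = p ++ q ∨ ∃ p' q' a s t, p = p' ++ [(a, s)] ∧ q = (a, t) :: q' ∧
      rcat p q = p' ++ (a, s + t) :: q' := by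
  rcases List.eq_nil_or_concat p with rfl | ⟨p', ⟨a, s⟩, rfl⟩
  · simp
  rcases q with _ | ⟨⟨b, t⟩, q'⟩
  · simp
  rw [List.concat_eq_append, rcat_append_singleton_cons]
  split_ifs with h
  · exact Or.inr ⟨p', q', a, s, t, rfl, h ▸ rfl, rfl⟩
  · simp

theorem forall_mem_rcat {f : ℝ → Prop} (hf : ∀ s t, f s → f t → f (s + t))
    {p q : List (α × ℝ)} (hp : ∀ x ∈ p, f x.2) (hq : ∀ x ∈ q, f x.2) :
    ∀ x ∈ rcat p q, f x.2 := by
  rcases rcat_eq_append_or p q with h | ⟨p', q', a, s, t, rfl, rfl, h⟩ <;> rw [h]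
  · exact fun x hx => (List.mem_append.1 hx).elim (hp x) (hq x)
  · simp only [List.mem_append, List.mem_cons] at hp hq ⊢
    rintro x (hx | rfl | hx)
    · exact hp x (Or.inl hx)
    · exact hf s t (hp (a, s) (by simp)) (hq _ (Or.inl rfl))
    · exact hq x (Or.inr hx)

theorem rcat_cons_of_ne_nil (x : α × ℝ) {p : List (α × ℝ)} (hp : p ≠ []) (q : List (α × ℝ)) :
    rcat (x :: p) q = x :: rcat p q := by
  obtain ⟨p', y, rfl⟩ := List.eq_nil_or_concat p |>.resolve_left hp
  rcases q with _ | ⟨⟨b, t⟩, q'⟩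
  · simp
  obtain ⟨a, s⟩ := y
  simp only [List.concat_eq_append, ← List.cons_append, rcat_append_singleton_cons]
  split_ifs <;> rfl

theorem rcat_singleton_assoc (a : α) (s : ℝ) (p q : List (α × ℝ)) :
    rcat [(a, s)] (rcat p q) = rcat (rcat [(a, s)] p) q := by
  match p, q with
  | [], _ => simp
  | _, [] => simp
  | [(b, t)], (c, r) :: q =>
    rcases eq_or_ne b c with rfl | hbc <;> rcases eq_or_ne a b with rfl | hab <;>
      simp [rcat_singleton_cons, rcat_cons_of_ne_nil, *, add_assoc]
  | (b, t) :: y :: p, q =>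
    rw [rcat_cons_of_ne_nil _ (List.cons_ne_nil _ _), rcat_singleton_cons, rcat_singleton_cons]
    split_ifs <;> simp [rcat_cons_of_ne_nil]

theorem IsExp.rcat_singleton {q : List (α × ℝ)} (hq : IsExp q) (a : α) (s : ℝ) :
    IsExp (rcat [(a, s)] q) := by
  rcases q with _ | ⟨⟨b, t⟩, q'⟩
  · exact List.isChain_singleton _
  rw [rcat_singleton_cons]
  split_ifs with h
  · subst h; exact List.isChain_cons.mpr (List.isChain_cons.mp hq)
  · exact List.isChain_cons_cons.mpr ⟨h, hq⟩

theorem rcat_singleton_of_isExp {a : α} {s : ℝ} {p : List (α × ℝ)} (h : IsExp ((a, s) :: p)) :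
    rcat [(a, s)] p = (a, s) :: p := by
  rcases p with _ | ⟨⟨b, t⟩, p⟩
  · simp
  · rw [rcat_singleton_cons, if_neg (List.isChain_cons_cons.mp h).1]

end Rcat

section Lev

variable (wdel wins : α → ℝ) (wsub : α → α → ℝ)

def lev : List α → List α → ℝ
  | [], [] => 0
  | [], b :: v => wins b + lev [] v
  | a :: u, [] => wdel a + lev u []
  | a :: u, b :: v =>
      min (wdel a + lev u (b :: v)) (min (wins b + lev (a :: u) v) (wsub a b + lev u v))
termination_by u v => u.length + v.length

theorem lev_nil_cons (b : α) (v : List α) :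
    lev wdel wins wsub [] (b :: v) = wins b + lev wdel wins wsub [] v := by
  rw [lev]

theorem lev_cons_nil (a : α) (u : List α) :
    lev wdel wins wsub (a :: u) [] = wdel a + lev wdel wins wsub u [] := by
  rw [lev]

theorem lev_nil_left (v : List α) : lev wdel wins wsub [] v = (v.map wins).sum := by
  induction v with
  | nil => simp [lev]
  | cons b v ih => rw [lev, ih, List.map_cons, List.sum_cons]

theorem lev_nil_right (u : List α) : lev wdel wins wsub u [] = (u.map wdel).sum := by
  induction u with
  | nil => simp [lev]
  | cons a u ih => rw [lev, ih, List.map_cons, List.sum_cons]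

theorem lev_cons_cons (a b : α) (u v : List α) :
    lev wdel wins wsub (a :: u) (b :: v) =
      min (wdel a + lev wdel wins wsub u (b :: v))
        (min (wins b + lev wdel wins wsub (a :: u) v) (wsub a b + lev wdel wins wsub u v)) := by
  rw [lev]

theorem lev_cons_left_le (a : α) (u v : List α) :
    lev wdel wins wsub (a :: u) v ≤ wdel a + lev wdel wins wsub u v := by
  cases v with
  | nil => rw [lev]
  | cons b v => rw [lev_cons_cons]; exact min_le_left _ _

theorem lev_cons_right_le (b : α) (u v : List α) :
    lev wdel wins wsub u (b :: v) ≤ wins b + lev wdel wins wsub u v := by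
  cases u with
  | nil => rw [lev]
  | cons a u => rw [lev_cons_cons]; exact (min_le_right _ _).trans (min_le_left _ _)

theorem lev_cons_cons_le (a b : α) (u v : List α) :
    lev wdel wins wsub (a :: u) (b :: v) ≤ wsub a b + lev wdel wins wsub u v := by
  rw [lev_cons_cons]; exact (min_le_right _ _).trans (min_le_right _ _)

theorem lev_self_nonpos (hsub : ∀ a, wsub a a = 0) (u : List α) : lev wdel wins wsub u u ≤ 0 := by
  induction u with
  | nil => simp [lev]
  | cons a u ih => linarith [lev_cons_cons_le wdel wins wsub a a u u, hsub a]

theorem lev_append_left_le (hsub : ∀ a, wsub a a = 0) (x u v : List α) :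
    lev wdel wins wsub (x ++ u) (x ++ v) ≤ lev wdel wins wsub u v := by
  induction x with
  | nil => rfl
  | cons a x ih =>
    simp only [List.cons_append]
    linarith [lev_cons_cons_le wdel wins wsub a a (x ++ u) (x ++ v), hsub a]

theorem lev_append_right_le (hsub : ∀ a, wsub a a = 0) (u v z : List α) :
    lev wdel wins wsub (u ++ z) (v ++ z) ≤ lev wdel wins wsub u v := by
  induction u generalizing v with
  | nil =>
    induction v with
    | nil => simpa [lev] using lev_self_nonpos wdel wins wsub hsub z
    | cons b v ih =>
      rw [List.cons_append, lev_nil_cons]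
      linarith [lev_cons_right_le wdel wins wsub b ([] ++ z) (v ++ z)]
  | cons a u ihu =>
    simp only [List.cons_append]
    induction v with
    | nil =>
      rw [lev_cons_nil]
      linarith [lev_cons_left_le wdel wins wsub a (u ++ z) ([] ++ z), ihu []]
    | cons b v ihv =>
      rw [List.cons_append, lev_cons_cons wdel wins wsub a b u v]
      refine le_min ?_ (le_min ?_ ?_)
      · have h := ihu (b :: v)
        rw [List.cons_append] at h
        linarith [lev_cons_left_le wdel wins wsub a (u ++ z) (b :: (v ++ z))]
      · linarith [lev_cons_right_le wdel wins wsub b (a :: (u ++ z)) (v ++ z)]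
      · linarith [lev_cons_cons_le wdel wins wsub a b (u ++ z) (v ++ z), ihu v]

theorem lev_append_left_self_le (hsub : ∀ a, wsub a a = 0) (x y : List α) :
    lev wdel wins wsub (x ++ y) y ≤ (x.map wdel).sum := by
  induction x with
  | nil => simpa using lev_self_nonpos wdel wins wsub hsub y
  | cons a x ih =>
    rw [List.cons_append, List.map_cons, List.sum_cons]
    linarith [lev_cons_left_le wdel wins wsub a (x ++ y) y]

theorem lev_self_append_left_le (hsub : ∀ a, wsub a a = 0) (x y : List α) :
    lev wdel wins wsub y (x ++ y) ≤ (x.map wins).sum := by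
  induction x with
  | nil => simpa using lev_self_nonpos wdel wins wsub hsub y
  | cons b x ih =>
    rw [List.cons_append, List.map_cons, List.sum_cons]
    linarith [lev_cons_right_le wdel wins wsub b y (x ++ y)]

theorem lev_replicate_replicate_le (k : ℕ) (a b : α) :
    lev wdel wins wsub (List.replicate k a) (List.replicate k b) ≤ k * wsub a b := by
  induction k with
  | zero => simp [lev]
  | succ k ih =>
    rw [List.replicate_succ, List.replicate_succ]
    push_cast
    linarith [lev_cons_cons_le wdel wins wsub a b (List.replicate k a) (List.replicate k b)]

end Lev

section EditSeq

variable {wdel wins : α → ℝ} {wsub : α → α → ℝ}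

theorem SStep.append_left {u v : List α} {c : ℝ} (h : SStep wdel wins wsub u v c) (x : List α) :
    SStep wdel wins wsub (x ++ u) (x ++ v) c := by
  obtain ⟨p₁, p₂, ⟨a, rfl, rfl, hc⟩ | ⟨a, rfl, rfl, hc⟩ | ⟨a, b, rfl, rfl, hc⟩⟩ := h
  · exact ⟨x ++ p₁, p₂, Or.inl ⟨a, by simp, by simp, hc⟩⟩
  · exact ⟨x ++ p₁, p₂, Or.inr (Or.inl ⟨a, by simp, by simp, hc⟩)⟩
  · exact ⟨x ++ p₁, p₂, Or.inr (Or.inr ⟨a, b, by simp, by simp, hc⟩)⟩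

theorem SEditCost.append_left {u v : List α} {c : ℝ} (h : SEditCost wdel wins wsub u v c)
    (x : List α) : SEditCost wdel wins wsub (x ++ u) (x ++ v) c := by
  induction h with
  | refl => exact .refl
  | step _ hs ih => exact ih.step (hs.append_left x)

variable (wdel wins wsub) in
theorem sEditCost_lev (u v : List α) : SEditCost wdel wins wsub u v (lev wdel wins wsub u v) := by
  induction u, v using lev.induct with
  | case1 => simpa [lev] using SEditCost.refl
  | case2 b v ih =>
    rw [lev_nil_cons, add_comm]
    exact ih.step ⟨[], v, Or.inl ⟨b, rfl, rfl, rfl⟩⟩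
  | case3 a u ih =>
    rw [lev_cons_nil, add_comm]
    exact (ih.append_left [a]).step ⟨[], [], Or.inr (Or.inl ⟨a, rfl, rfl, rfl⟩)⟩
  | case4 a u b v ih₁ ih₂ ih₃ =>
    rw [lev_cons_cons]
    rcases min_choice (wdel a + lev wdel wins wsub u (b :: v))
      (min (wins b + lev wdel wins wsub (a :: u) v) (wsub a b + lev wdel wins wsub u v)) with h | h
    · rw [h, add_comm]
      exact (ih₁.append_left [a]).step ⟨[], b :: v, Or.inr (Or.inl ⟨a, rfl, rfl, rfl⟩)⟩
    rw [h]
    rcases min_choice (wins b + lev wdel wins wsub (a :: u) v)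
      (wsub a b + lev wdel wins wsub u v) with h | h <;> rw [h, add_comm]
    · exact ih₂.step ⟨[], v, Or.inl ⟨b, rfl, rfl, rfl⟩⟩
    · exact (ih₃.append_left [a]).step ⟨[], v, Or.inr (Or.inr ⟨a, b, rfl, rfl, rfl⟩)⟩

end EditSeq

structure IsEditWeights (wdel wins : α → ℝ) (wsub : α → α → ℝ) : Prop where
  del_nonneg : ∀ a, 0 ≤ wdel a
  ins_nonneg : ∀ a, 0 ≤ wins a
  sub_nonneg : ∀ a b, 0 ≤ wsub a b
  sub_self : ∀ a, wsub a a = 0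
  sub_triangle : ∀ a b c, wsub a c ≤ wsub a b + wsub b c
  ins_le : ∀ a b, wins b ≤ wins a + wsub a b
  del_le : ∀ a b, wdel a ≤ wsub a b + wdel b

section Triangle

variable {wdel wins : α → ℝ} {wsub : α → α → ℝ}

theorem lev_append_le_of_forall_le {r r' : List α} {c : ℝ}
    (h : ∀ s, lev wdel wins wsub s r' ≤ lev wdel wins wsub s r + c) (x s : List α) :
    lev wdel wins wsub s (x ++ r') ≤ lev wdel wins wsub s (x ++ r) + c := by
  induction x generalizing s with
  | nil => exact h s
  | cons b x ihx =>
    simp only [List.cons_append]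
    induction s with
    | nil => rw [lev_nil_cons, lev_nil_cons]; linarith [ihx []]
    | cons d s ihs =>
      rw [lev_cons_cons, lev_cons_cons, ← min_add_add_right, ← min_add_add_right]
      refine min_le_min ?_ (min_le_min ?_ ?_) <;> linarith [ihx (d :: s), ihx s]

theorem IsEditWeights.lev_le_lev_cons_add (hw : IsEditWeights wdel wins wsub) (a : α)
    (y s : List α) : lev wdel wins wsub s y ≤ lev wdel wins wsub s (a :: y) + wdel a := by
  induction s with
  | nil => rw [lev_nil_cons]; linarith [hw.ins_nonneg a, hw.del_nonneg a]
  | cons d s ih =>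
    rw [lev_cons_cons, ← min_add_add_right, ← min_add_add_right]
    have hd := lev_cons_left_le wdel wins wsub d s y
    refine le_min (by linarith) (le_min ?_ ?_)
    · linarith [hw.ins_nonneg a, hw.del_nonneg a]
    · linarith [hw.del_le d a]

theorem IsEditWeights.lev_cons_le_lev_cons_add (hw : IsEditWeights wdel wins wsub) (a b : α)
    (y s : List α) :
    lev wdel wins wsub s (b :: y) ≤ lev wdel wins wsub s (a :: y) + wsub a b := by
  induction s with
  | nil => rw [lev_nil_cons, lev_nil_cons]; linarith [hw.ins_le a b]
  | cons d s ih =>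
    rw [lev_cons_cons, lev_cons_cons, ← min_add_add_right, ← min_add_add_right]
    refine min_le_min (by linarith) (min_le_min ?_ ?_)
    · linarith [hw.ins_le a b]
    · linarith [hw.sub_triangle d a b]

theorem IsEditWeights.lev_le_of_sStep (hw : IsEditWeights wdel wins wsub) {v w : List α} {c : ℝ}
    (h : SStep wdel wins wsub v w c) (u : List α) :
    lev wdel wins wsub u w ≤ lev wdel wins wsub u v + c := by
  obtain ⟨x, y, ⟨a, rfl, rfl, rfl⟩ | ⟨a, rfl, rfl, rfl⟩ | ⟨a, b, rfl, rfl, rfl⟩⟩ := h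
  · exact lev_append_le_of_forall_le
      (fun s => (lev_cons_right_le wdel wins wsub a s y).trans_eq (add_comm _ _)) x u
  · exact lev_append_le_of_forall_le (hw.lev_le_lev_cons_add a y) x u
  · exact lev_append_le_of_forall_le (hw.lev_cons_le_lev_cons_add a b y) x u

theorem IsEditWeights.lev_le_of_sEditCost (hw : IsEditWeights wdel wins wsub) {v w : List α}
    {c : ℝ} (h : SEditCost wdel wins wsub v w c) (u : List α) :
    lev wdel wins wsub u w ≤ lev wdel wins wsub u v + c := by
  induction h with
  | refl => simp
  | step _ hs ih => linarith [hw.lev_le_of_sStep hs u]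

theorem IsEditWeights.lev_triangle (hw : IsEditWeights wdel wins wsub) (u v w : List α) :
    lev wdel wins wsub u w ≤ lev wdel wins wsub u v + lev wdel wins wsub v w :=
  hw.lev_le_of_sEditCost (sEditCost_lev wdel wins wsub v w) u

end Triangle

def repeatEach (m : ℕ) (w : List α) : List α := w.flatMap (List.replicate m)

@[simp]
theorem repeatEach_nil (m : ℕ) : repeatEach m ([] : List α) = [] := rfl

theorem repeatEach_cons (m : ℕ) (a : α) (w : List α) :
    repeatEach m (a :: w) = List.replicate m a ++ repeatEach m w := rfl

theorem sum_map_repeatEach (f : α → ℝ) (m : ℕ) (w : List α) :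
    ((repeatEach m w).map f).sum = m * (w.map f).sum := by
  induction w with
  | nil => simp
  | cons a w ih => simp [repeatEach_cons, ih, List.sum_replicate]; ring

theorem repeatEach_append (m : ℕ) (x y : List α) :
    repeatEach m (x ++ y) = repeatEach m x ++ repeatEach m y :=
  List.flatMap_append

theorem repeatEach_replicate (m k : ℕ) (a : α) :
    repeatEach m (List.replicate k a) = List.replicate (k * m) a := by
  simp [repeatEach, List.flatMap_replicate]

section Interp

variable (wdel wins : α → ℝ) (wsub : α → α → ℝ)

/-- Linear on each of the triangles `j ≤ i` and `i ≤ j` of `[0, m]²`, with the values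
`m * lev u v`, `m * lev (a :: u) v`, `m * lev u (b :: v)`, `m * lev (a :: u) (b :: v)` at the
corners `(0, 0)`, `(m, 0)`, `(0, m)`, `(m, m)`. -/
def levInterp (m : ℕ) (a : α) (u : List α) (b : α) (v : List α) (i j : ℕ) : ℝ :=
  m * lev wdel wins wsub u v + i * (lev wdel wins wsub (a :: u) v - lev wdel wins wsub u v) +
    j * (lev wdel wins wsub u (b :: v) - lev wdel wins wsub u v) +
    (min i j : ℕ) * (lev wdel wins wsub (a :: u) (b :: v) - lev wdel wins wsub (a :: u) v -
      lev wdel wins wsub u (b :: v) + lev wdel wins wsub u v)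

section Block

variable (m : ℕ) (a : α) (u : List α) (b : α) (v : List α)

theorem levInterp_succ_left_le (i j : ℕ) :
    levInterp wdel wins wsub m a u b v (i + 1) j ≤
      wdel a + levInterp wdel wins wsub m a u b v i j := by
  have h₁ := lev_cons_left_le wdel wins wsub a u v
  have h₂ := lev_cons_left_le wdel wins wsub a u (b :: v)
  rcases le_or_gt j i with h | h
  · simp only [levInterp, min_eq_right h, min_eq_right (h.trans i.le_succ)]
    push_cast; linarith
  · simp only [levInterp, min_eq_left h.le, min_eq_left (Nat.succ_le_of_lt h)]
    push_cast; linarith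

theorem levInterp_succ_right_le (i j : ℕ) :
    levInterp wdel wins wsub m a u b v i (j + 1) ≤
      wins b + levInterp wdel wins wsub m a u b v i j := by
  have h₁ := lev_cons_right_le wdel wins wsub b u v
  have h₂ := lev_cons_right_le wdel wins wsub b (a :: u) v
  rcases le_or_gt i j with h | h
  · simp only [levInterp, min_eq_left h, min_eq_left (h.trans j.le_succ)]
    push_cast; linarith
  · simp only [levInterp, min_eq_right h.le, min_eq_right (Nat.succ_le_of_lt h)]
    push_cast; linarith

theorem levInterp_succ_succ_le (i j : ℕ) :
    levInterp wdel wins wsub m a u b v (i + 1) (j + 1) ≤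
      wsub a b + levInterp wdel wins wsub m a u b v i j := by
  have := lev_cons_cons_le wdel wins wsub a b u v
  simp only [levInterp, Nat.succ_min_succ]
  push_cast; linarith

theorem levInterp_zero_left (j : ℕ) :
    levInterp wdel wins wsub m a u b v 0 j =
      m * lev wdel wins wsub u v + j * (lev wdel wins wsub u (b :: v) - lev wdel wins wsub u v) := by
  simp [levInterp]

theorem levInterp_zero_right (i : ℕ) :
    levInterp wdel wins wsub m a u b v i 0 =
      m * lev wdel wins wsub u v + i * (lev wdel wins wsub (a :: u) v - lev wdel wins wsub u v) := by
  simp [levInterp]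

theorem levInterp_self_left {j : ℕ} (hj : j ≤ m) :
    levInterp wdel wins wsub m a u b v m j = m * lev wdel wins wsub (a :: u) v +
      j * (lev wdel wins wsub (a :: u) (b :: v) - lev wdel wins wsub (a :: u) v) := by
  simp only [levInterp, min_eq_right hj]; ring

theorem levInterp_self_right {i : ℕ} (hi : i ≤ m) :
    levInterp wdel wins wsub m a u b v i m = m * lev wdel wins wsub u (b :: v) +
      i * (lev wdel wins wsub (a :: u) (b :: v) - lev wdel wins wsub u (b :: v)) := by
  simp only [levInterp, min_eq_left hi]; ring

theorem levInterp_le_lev_of_boundary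
    (h₀ : ∀ j ≤ m, levInterp wdel wins wsub m a u b v 0 j ≤
      lev wdel wins wsub (repeatEach m u) (List.replicate j b ++ repeatEach m v))
    (h₁ : ∀ i ≤ m, levInterp wdel wins wsub m a u b v i 0 ≤
      lev wdel wins wsub (List.replicate i a ++ repeatEach m u) (repeatEach m v)) :
    ∀ i j, i ≤ m → j ≤ m → levInterp wdel wins wsub m a u b v i j ≤
      lev wdel wins wsub (List.replicate i a ++ repeatEach m u)
        (List.replicate j b ++ repeatEach m v)
  | 0, j, _, hj => by simpa using h₀ j hj
  | i + 1, 0, hi, _ => by simpa using h₁ (i + 1) hi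
  | i + 1, j + 1, hi, hj => by
    have hdel := levInterp_le_lev_of_boundary h₀ h₁ i (j + 1) (by omega) hj
    have hins := levInterp_le_lev_of_boundary h₀ h₁ (i + 1) j hi (by omega)
    have hsub := levInterp_le_lev_of_boundary h₀ h₁ i j (by omega) (by omega)
    simp only [List.replicate_succ, List.cons_append, lev_cons_cons] at hdel hins ⊢
    refine le_min ?_ (le_min ?_ ?_)
    · linarith [levInterp_succ_left_le wdel wins wsub m a u b v i (j + 1)]
    · linarith [levInterp_succ_right_le wdel wins wsub m a u b v (i + 1) j]
    · linarith [levInterp_succ_succ_le wdel wins wsub m a u b v i j]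
termination_by i j => i + j

end Block

theorem levInterp_le_lev (m : ℕ) (a : α) (u : List α) (b : α) (v : List α) {i j : ℕ}
    (hi : i ≤ m) (hj : j ≤ m) :
    levInterp wdel wins wsub m a u b v i j ≤
      lev wdel wins wsub (List.replicate i a ++ repeatEach m u)
        (List.replicate j b ++ repeatEach m v) := by
  refine levInterp_le_lev_of_boundary wdel wins wsub m a u b v ?_ ?_ i j hi hj
  · intro j hj
    match u with
    | [] =>
      simp [levInterp_zero_left, lev_nil_left, sum_map_repeatEach, List.sum_replicate, add_comm]
    | a' :: u' =>
      rw [levInterp_zero_left, ← levInterp_self_left wdel wins wsub m a' u' b v hj,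
        repeatEach_cons]
      exact levInterp_le_lev m a' u' b v le_rfl hj
  · intro i hi
    match v with
    | [] =>
      simp [levInterp_zero_right, lev_nil_right, sum_map_repeatEach, List.sum_replicate, add_comm]
    | b' :: v' =>
      rw [levInterp_zero_right, ← levInterp_self_right wdel wins wsub m a u b' v' hi,
        repeatEach_cons]
      exact levInterp_le_lev m a u b' v' hi le_rfl
termination_by u.length + v.length

theorem lev_repeatEach_ge (m : ℕ) (u v : List α) :
    m * lev wdel wins wsub u v ≤ lev wdel wins wsub (repeatEach m u) (repeatEach m v) := by
  match u, v with
  | [], v => simp [lev_nil_left, sum_map_repeatEach]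
  | a :: u, [] => simp [lev_nil_right, sum_map_repeatEach]
  | a :: u, b :: v =>
    have h := levInterp_le_lev wdel wins wsub m a u b v le_rfl le_rfl
    rwa [levInterp_self_left wdel wins wsub m a u b v le_rfl, ← mul_add, add_sub_cancel,
      ← repeatEach_cons, ← repeatEach_cons] at h

end Interp

noncomputable def floorWord (n : ℕ) (p : List (α × ℝ)) : List α :=
  p.flatMap fun x => List.replicate ⌊(n : ℝ) * x.2⌋₊ x.1

@[simp]
theorem floorWord_nil (n : ℕ) : floorWord n ([] : List (α × ℝ)) = [] := rfl

theorem floorWord_cons (n : ℕ) (a : α) (s : ℝ) (p : List (α × ℝ)) :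
    floorWord n ((a, s) :: p) = List.replicate ⌊(n : ℝ) * s⌋₊ a ++ floorWord n p := rfl

theorem floorWord_append (n : ℕ) (p q : List (α × ℝ)) :
    floorWord n (p ++ q) = floorWord n p ++ floorWord n q :=
  List.flatMap_append

theorem floorWord_singleton (n : ℕ) (a : α) (s : ℝ) :
    floorWord n [(a, s)] = List.replicate ⌊(n : ℝ) * s⌋₊ a := by
  simp [floorWord]

theorem floorWord_mul {N : ℕ} {p : List (α × ℝ)} (hp : ∀ x ∈ p, ∃ k : ℕ, N * x.2 = k)
    (m : ℕ) : floorWord (m * N) p = repeatEach m (floorWord N p) := by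
  induction p with
  | nil => rfl
  | cons x p ih =>
    obtain ⟨k, hk⟩ := hp x (by simp)
    have hmk : ((m * N : ℕ) : ℝ) * x.2 = (k * m : ℕ) := by push_cast; rw [← hk]; ring
    rw [floorWord_cons, floorWord_cons, hmk, hk, Nat.floor_natCast, Nat.floor_natCast,
      ih fun y hy => hp y (by simp [hy]), repeatEach_append, repeatEach_replicate]

section Sampling

variable [DecidableEq α] {wdel wins : α → ℝ} {wsub : α → α → ℝ}

theorem IsEditWeights.exists_lev_floorWord_rcat_le (hw : IsEditWeights wdel wins wsub)
    {p q : List (α × ℝ)} (hp : ∀ x ∈ p, 0 ≤ x.2) (hq : ∀ x ∈ q, 0 ≤ x.2) :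
    ∃ K, ∀ n : ℕ,
      lev wdel wins wsub (floorWord n (rcat p q)) (floorWord n p ++ floorWord n q) ≤ K ∧
      lev wdel wins wsub (floorWord n p ++ floorWord n q) (floorWord n (rcat p q)) ≤ K := by
  rcases rcat_eq_append_or p q with h | ⟨p', q', a, s, t, rfl, rfl, h⟩
  · refine ⟨0, fun n => ?_⟩
    rw [h, floorWord_append]
    exact ⟨lev_self_nonpos _ _ _ hw.sub_self _, lev_self_nonpos _ _ _ hw.sub_self _⟩
  refine ⟨wdel a + wins a, fun n => ?_⟩
  have hs : 0 ≤ (n : ℝ) * s := mul_nonneg n.cast_nonneg (hp (a, s) (by simp))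
  have ht : 0 ≤ (n : ℝ) * t := mul_nonneg n.cast_nonneg (hq (a, t) (by simp))
  obtain ⟨e, he, hfloor⟩ := Nat.exists_floor_add_eq hs ht
  set W := floorWord n p' ++ List.replicate (⌊(n : ℝ) * s⌋₊ + ⌊(n : ℝ) * t⌋₊) a
  have hmerged : floorWord n (rcat (p' ++ [(a, s)]) ((a, t) :: q')) =
      W ++ (List.replicate e a ++ floorWord n q') := by
    simp only [W, h, floorWord_append, floorWord_cons, mul_add, hfloor, List.replicate_add,
      List.append_assoc]
  have hsplit : floorWord n (p' ++ [(a, s)]) ++ floorWord n ((a, t) :: q') =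
      W ++ floorWord n q' := by
    simp only [W, floorWord_append, floorWord_cons, floorWord_nil, List.replicate_add,
      List.append_assoc, List.nil_append]
  have he' : (e : ℝ) ≤ 1 := by exact_mod_cast he
  rw [hmerged, hsplit]
  constructor
  · refine (lev_append_left_le _ _ _ hw.sub_self _ _ _).trans ?_
    refine (lev_append_left_self_le _ _ _ hw.sub_self _ _).trans ?_
    simp only [List.map_replicate, List.sum_replicate, nsmul_eq_mul]
    nlinarith [hw.del_nonneg a, hw.ins_nonneg a]
  · refine (lev_append_left_le _ _ _ hw.sub_self _ _ _).trans ?_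
    refine (lev_self_append_left_le _ _ _ hw.sub_self _ _).trans ?_
    simp only [List.map_replicate, List.sum_replicate, nsmul_eq_mul]
    nlinarith [hw.del_nonneg a, hw.ins_nonneg a]

theorem IsEditWeights.exists_lev_floorWord_rcat_rcat_le (hw : IsEditWeights wdel wins wsub)
    {P Q X Y : List (α × ℝ)} (hP : ∀ x ∈ P, 0 ≤ x.2) (hQ : ∀ x ∈ Q, 0 ≤ x.2)
    (hX : ∀ x ∈ X, 0 ≤ x.2) (hY : ∀ x ∈ Y, 0 ≤ x.2) :
    ∃ K, ∀ n : ℕ,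
      lev wdel wins wsub (floorWord n (rcat P (rcat X Q))) (floorWord n (rcat P (rcat Y Q))) ≤
        lev wdel wins wsub (floorWord n X) (floorWord n Y) + K := by
  have hnonneg : ∀ s t : ℝ, 0 ≤ s → 0 ≤ t → 0 ≤ s + t := fun _ _ => add_nonneg
  obtain ⟨K₁, h₁⟩ := hw.exists_lev_floorWord_rcat_le hP (forall_mem_rcat hnonneg hX hQ)
  obtain ⟨K₂, h₂⟩ := hw.exists_lev_floorWord_rcat_le hX hQ
  obtain ⟨K₃, h₃⟩ := hw.exists_lev_floorWord_rcat_le hY hQ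
  obtain ⟨K₄, h₄⟩ := hw.exists_lev_floorWord_rcat_le hP (forall_mem_rcat hnonneg hY hQ)
  refine ⟨K₁ + K₂ + K₃ + K₄, fun n => ?_⟩
  set F := floorWord (α := α) n
  set L := lev wdel wins wsub
  have e₂ : L (F P ++ F (rcat X Q)) (F P ++ (F X ++ F Q)) ≤ K₂ :=
    (lev_append_left_le _ _ _ hw.sub_self _ _ _).trans (h₂ n).1
  have e₃ : L (F P ++ (F X ++ F Q)) (F P ++ (F Y ++ F Q)) ≤ L (F X) (F Y) :=
    (lev_append_left_le _ _ _ hw.sub_self _ _ _).trans (lev_append_right_le _ _ _ hw.sub_self _ _ _)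
  have e₄ : L (F P ++ (F Y ++ F Q)) (F P ++ F (rcat Y Q)) ≤ K₃ :=
    (lev_append_left_le _ _ _ hw.sub_self _ _ _).trans (h₃ n).2
  linarith [(h₁ n).1, (h₄ n).2,
    hw.lev_triangle (F (rcat P (rcat X Q))) (F P ++ F (rcat X Q)) (F (rcat P (rcat Y Q))),
    hw.lev_triangle (F P ++ F (rcat X Q)) (F P ++ (F X ++ F Q)) (F (rcat P (rcat Y Q))),
    hw.lev_triangle (F P ++ (F X ++ F Q)) (F P ++ (F Y ++ F Q)) (F (rcat P (rcat Y Q))),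
    hw.lev_triangle (F P ++ (F Y ++ F Q)) (F P ++ F (rcat Y Q)) (F (rcat P (rcat Y Q)))]

theorem IsEditWeights.exists_lev_floorWord_le_of_step (hw : IsEditWeights wdel wins wsub)
    {u v : List (α × ℝ)} {c : ℝ} (h : Step wdel wins wsub u v c) :
    ∃ K, ∀ n : ℕ, lev wdel wins wsub (floorWord n u) (floorWord n v) ≤ n * c + K := by
  obtain ⟨P, Q, hP, hQ, hstep⟩ := h
  have of_rcat : ∀ {X Y : List (α × ℝ)}, (∀ x ∈ X, 0 ≤ x.2) → (∀ x ∈ Y, 0 ≤ x.2) →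
      u = rcat P (rcat X Q) → v = rcat P (rcat Y Q) →
      (∀ n : ℕ, lev wdel wins wsub (floorWord n X) (floorWord n Y) ≤ n * c) →
      ∃ K, ∀ n : ℕ, lev wdel wins wsub (floorWord n u) (floorWord n v) ≤ n * c + K := by
    rintro X Y hX hY rfl rfl hXY
    obtain ⟨K, hK⟩ := hw.exists_lev_floorWord_rcat_rcat_le (fun x hx => (hP.2 x hx).le)
      (fun x hx => (hQ.2 x hx).le) hX hY
    exact ⟨K, fun n => (hK n).trans (by linarith [hXY n])⟩
  have floor_mul_le : ∀ (n : ℕ) {q w : ℝ}, 0 < q → 0 ≤ w → ⌊(n : ℝ) * q⌋₊ * w ≤ n * (q * w) :=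
    fun n q w hq hw₀ => by
      rw [← mul_assoc]
      exact mul_le_mul_of_nonneg_right (Nat.floor_le (by positivity)) hw₀
  have hsing : ∀ (a : α) {q : ℝ}, 0 < q → ∀ x ∈ [(a, q)], 0 ≤ x.2 := by simp +contextual [le_of_lt]
  rcases hstep with ⟨a, q, hq, rfl, rfl, rfl⟩ | ⟨a, q, hq, rfl, rfl, rfl⟩ |
    ⟨a, b, q, hq, rfl, rfl, rfl⟩
  · refine of_rcat (X := []) (by simp) (hsing a hq) (by rw [rcat_nil_left]) rfl fun n => ?_
    simpa [floorWord_singleton, lev_nil_left] using floor_mul_le n hq (hw.ins_nonneg a)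
  · refine of_rcat (Y := []) (hsing a hq) (by simp) rfl (by rw [rcat_nil_left]) fun n => ?_
    simpa [floorWord_singleton, lev_nil_right] using floor_mul_le n hq (hw.del_nonneg a)
  · refine of_rcat (hsing a hq) (hsing b hq) rfl rfl fun n => ?_
    rw [floorWord_singleton, floorWord_singleton]
    exact (lev_replicate_replicate_le _ _ _ _ a b).trans (floor_mul_le n hq (hw.sub_nonneg a b))

theorem IsEditWeights.exists_lev_floorWord_le_of_editCost (hw : IsEditWeights wdel wins wsub)
    {u v : List (α × ℝ)} {c : ℝ} (h : EditCost wdel wins wsub u v c) :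
    ∃ K, ∀ n : ℕ, lev wdel wins wsub (floorWord n u) (floorWord n v) ≤ n * c + K := by
  induction h with
  | refl => exact ⟨0, fun n => by simpa using lev_self_nonpos _ _ _ hw.sub_self _⟩
  | @step p q c c' _ hs ih =>
    obtain ⟨K₁, h₁⟩ := ih
    obtain ⟨K₂, h₂⟩ := hw.exists_lev_floorWord_le_of_step hs
    refine ⟨K₁ + K₂, fun n => ?_⟩
    linarith [hw.lev_triangle (floorWord n u) (floorWord n p) (floorWord n q), h₁ n, h₂ n,
      mul_add (n : ℝ) c c']

theorem IsEditWeights.lev_floorWord_le_of_editCost (hw : IsEditWeights wdel wins wsub) {N : ℕ}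
    {p₁ p₂ : List (α × ℝ)} (h₁ : ∀ x ∈ p₁, ∃ k : ℕ, N * x.2 = k)
    (h₂ : ∀ x ∈ p₂, ∃ k : ℕ, N * x.2 = k) {c : ℝ} (h : EditCost wdel wins wsub p₁ p₂ c) :
    lev wdel wins wsub (floorWord N p₁) (floorWord N p₂) ≤ N * c := by
  obtain ⟨K, hK⟩ := hw.exists_lev_floorWord_le_of_editCost h
  refine le_of_forall_nat_mul_le_add (C := K) fun m => ?_
  have := hK (m * N)
  rw [floorWord_mul h₁, floorWord_mul h₂] at this
  push_cast at this
  linarith [lev_repeatEach_ge wdel wins wsub m (floorWord N p₁) (floorWord N p₂)]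

end Sampling

section Words

variable [DecidableEq α]

noncomputable def ofWordScaled (ε : ℝ) (w : List α) : List (α × ℝ) :=
  eRep (· + ·) (w.map fun a => (a, ε))

@[simp]
theorem ofWordScaled_nil (ε : ℝ) : ofWordScaled ε ([] : List α) = [] := rfl

theorem ofWordScaled_cons (ε : ℝ) (a : α) (w : List α) :
    ofWordScaled ε (a :: w) = rcat [(a, ε)] (ofWordScaled ε w) := rfl

theorem ofWordScaled_append (ε : ℝ) (x y : List α) :
    ofWordScaled ε (x ++ y) = rcat (ofWordScaled ε x) (ofWordScaled ε y) := by
  induction x with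
  | nil => simp
  | cons a x ih => rw [List.cons_append, ofWordScaled_cons, ih, rcat_singleton_assoc]; rfl

theorem res_ofWordScaled {ε : ℝ} (hε : 0 < ε) (w : List α) : RES (ofWordScaled ε w) := by
  induction w with
  | nil => exact ⟨List.isChain_nil, by simp⟩
  | cons a w ih =>
    refine ⟨ih.1.rcat_singleton a ε, forall_mem_rcat (fun _ _ => add_pos) (by simpa) ih.2⟩

theorem ratExp_ofWordScaled (r : ℚ) (w : List α) : RatExp (ofWordScaled r w) := by
  induction w with
  | nil => simp [RatExp]
  | cons a w ih =>
    refine forall_mem_rcat (f := fun s => ∃ q : ℚ, s = q) ?_ (by simp) ih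
    rintro _ _ ⟨r₁, rfl⟩ ⟨r₂, rfl⟩
    exact ⟨r₁ + r₂, by push_cast; rfl⟩

theorem ofWordScaled_replicate_succ (ε : ℝ) (k : ℕ) (a : α) :
    ofWordScaled ε (List.replicate (k + 1) a) = [(a, (k + 1) * ε)] := by
  induction k with
  | zero => simp [ofWordScaled_cons]
  | succ k ih =>
    rw [List.replicate_succ, ofWordScaled_cons, ih, rcat_singleton_cons, if_pos rfl]
    push_cast; ring_nf

theorem ofWordScaled_floorWord {N : ℕ} (hN : 0 < N) {p : List (α × ℝ)} (hp : RES p)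
    (hNp : ∀ x ∈ p, ∃ k : ℕ, N * x.2 = k) : ofWordScaled (N : ℝ)⁻¹ (floorWord N p) = p := by
  induction p with
  | nil => rfl
  | cons x p ih =>
    obtain ⟨a, s⟩ := x
    obtain ⟨k', hk⟩ := hNp (a, s) (by simp)
    have hpos : 0 < (N : ℝ) * s := mul_pos (by exact_mod_cast hN) (hp.2 (a, s) (by simp))
    obtain ⟨k, rfl⟩ : ∃ k, k' = k + 1 := Nat.exists_eq_succ_of_ne_zero (by rintro rfl; simp_all)
    have hs : ((k + 1 : ℕ) : ℝ) * (N : ℝ)⁻¹ = s := by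
      rw [← hk]; field_simp
    rw [floorWord_cons, hk, Nat.floor_natCast, ofWordScaled_append, ofWordScaled_replicate_succ,
      ← Nat.cast_succ, hs, ih ⟨(List.isChain_cons.mp hp.1).2, fun y hy => hp.2 y (by simp [hy])⟩
        fun y hy => hNp y (by simp [hy]), rcat_singleton_of_isExp hp.1]

theorem SStep.step_ofWordScaled {wdel wins : α → ℝ} {wsub : α → α → ℝ} {ε : ℝ} (hε : 0 < ε)
    {w w' : List α} {c : ℝ} (h : SStep wdel wins wsub w w' c) :
    Step wdel wins wsub (ofWordScaled ε w) (ofWordScaled ε w') (ε * c) := by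
  obtain ⟨x, y, ⟨a, rfl, rfl, rfl⟩ | ⟨a, rfl, rfl, rfl⟩ | ⟨a, b, rfl, rfl, rfl⟩⟩ := h <;>
    refine ⟨ofWordScaled ε x, ofWordScaled ε y, res_ofWordScaled hε x, res_ofWordScaled hε y, ?_⟩
  · exact Or.inl ⟨a, ε, hε, ofWordScaled_append .., ofWordScaled_append .., rfl⟩
  · exact Or.inr (Or.inl ⟨a, ε, hε, ofWordScaled_append .., ofWordScaled_append .., rfl⟩)
  · exact Or.inr (Or.inr ⟨a, b, ε, hε, ofWordScaled_append .., ofWordScaled_append .., rfl⟩)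

theorem SEditCost.editCostIn_ofWordScaled {wdel wins : α → ℝ} {wsub : α → α → ℝ} {r : ℚ}
    (hr : 0 < r) {w w' : List α} {c : ℝ} (h : SEditCost wdel wins wsub w w' c) :
    EditCostIn RatExp wdel wins wsub (ofWordScaled r w) (ofWordScaled r w') (r * c) := by
  induction h with
  | refl => simpa using EditCostIn.refl
  | step _ hs ih =>
    rw [mul_add]
    exact ih.step (hs.step_ofWordScaled (by exact_mod_cast hr)) (ratExp_ofWordScaled r _)

theorem EditCostIn.editCost {P : List (α × ℝ) → Prop} {wdel wins : α → ℝ}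
    {wsub : α → α → ℝ} {u v : List (α × ℝ)} {c : ℝ} (h : EditCostIn P wdel wins wsub u v c) :
    EditCost wdel wins wsub u v c := by
  induction h with
  | refl => exact .refl
  | step _ hs _ ih => exact ih.step hs

end Words

theorem RatExp.exists_nat_mul_eq {l : List (α × ℝ)} (hl : RatExp l) (h0 : ∀ x ∈ l, 0 ≤ x.2) :
    ∃ N : ℕ, 0 < N ∧ ∀ x ∈ l, ∃ k : ℕ, N * x.2 = k := by
  induction l with
  | nil => exact ⟨1, one_pos, by simp⟩
  | cons x l ih =>
    obtain ⟨N, hN, hNl⟩ := ih (fun y hy => hl y (by simp [hy])) (fun y hy => h0 y (by simp [hy]))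
    obtain ⟨r, hr⟩ := hl x (by simp)
    have hnum : (r.num.toNat : ℝ) = r.den * r := by
      have : 0 ≤ r := by exact_mod_cast hr ▸ h0 x (by simp)
      have h : ((r.num.toNat : ℤ) : ℚ) = r * r.den := by
        rw [Int.toNat_of_nonneg (Rat.num_nonneg.2 this), Rat.mul_den_eq_num]
      rw [mul_comm]
      exact_mod_cast h
    refine ⟨N * r.den, Nat.mul_pos hN r.den_pos, ?_⟩
    rintro y (_ | ⟨_, hy⟩)
    · exact ⟨N * r.num.toNat, by push_cast; rw [hnum, hr]; ring⟩
    · obtain ⟨k, hk⟩ := hNl y hy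
      exact ⟨r.den * k, by push_cast; rw [← hk]; ring⟩

end ExpStr

open ExpStr in
theorem min_seq_rat_general {α : Type*} [DecidableEq α]
    (wdel wins : α → ℝ) (wsub : α → α → ℝ)
    (hdel : ∀ a, 0 < wdel a) (hins : ∀ a, 0 < wins a)
    (hsub0 : ∀ a, wsub a a = 0) (hsubpos : ∀ a b, a ≠ b → 0 < wsub a b)
    (htri₁ : ∀ a b c, wsub a c ≤ wsub a b + wsub b c)
    (htri₃ : ∀ a b, wins b ≤ wins a + wsub a b)
    (htri₄ : ∀ a b, wdel a ≤ wsub a b + wdel b)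
    (p₁ p₂ : List (α × ℝ)) (h₁ : RES p₁) (h₂ : RES p₂)
    (hq₁ : RatExp p₁) (hq₂ : RatExp p₂) :
    EditCostIn RatExp wdel wins wsub p₁ p₂ (eDist wdel wins wsub p₁ p₂) ∧
    sInf {c | EditCostIn RatExp wdel wins wsub p₁ p₂ c} =
      eDist wdel wins wsub p₁ p₂ := by
  have hw : IsEditWeights wdel wins wsub :=
    ⟨fun a => (hdel a).le, fun a => (hins a).le,
      fun a b => (eq_or_ne a b).elim (fun h => h ▸ (hsub0 a).ge) fun h => (hsubpos a b h).le,
      hsub0, htri₁, htri₃, htri₄⟩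
  obtain ⟨N, hN, hden⟩ := RatExp.exists_nat_mul_eq (l := p₁ ++ p₂)
    (fun x hx => (List.mem_append.1 hx).elim (hq₁ x) (hq₂ x))
    (fun x hx => (List.mem_append.1 hx).elim (fun h => (h₁.2 x h).le) fun h => (h₂.2 x h).le)
  have hden₁ := fun x hx => hden x (List.mem_append_left p₂ hx)
  have hden₂ := fun x hx => hden x (List.mem_append_right p₁ hx)
  set D := lev wdel wins wsub (floorWord N p₁) (floorWord N p₂) / N
  have hattain : EditCostIn RatExp wdel wins wsub p₁ p₂ D := by
    have := (sEditCost_lev wdel wins wsub (floorWord N p₁) (floorWord N p₂)).editCostIn_ofWordScaled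
      (r := (N : ℚ)⁻¹) (by positivity)
    rwa [Rat.cast_inv, Rat.cast_natCast, ofWordScaled_floorWord hN h₁ hden₁,
      ofWordScaled_floorWord hN h₂ hden₂, inv_mul_eq_div] at this
  have hlower : ∀ c, EditCost wdel wins wsub p₁ p₂ c → D ≤ c := fun c hc =>
    (div_le_iff₀' (by exact_mod_cast hN)).2 (hw.lev_floorWord_le_of_editCost hden₁ hden₂ hc)
  have hD : eDist wdel wins wsub p₁ p₂ = D := IsLeast.csInf_eq ⟨hattain.editCost, hlower⟩
  exact ⟨hD ▸ hattain, hD ▸ IsLeast.csInf_eq ⟨hattain, fun c hc => hlower c hc.editCost⟩⟩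

open ExpStr in
/-- For `ℚ⁺`-exponent-strings `p₁, p₂` there is a minimum-cost exp-edit
sequence from `p₁` to `p₂` consisting only of `ℚ⁺`-exponent-strings, of
total cost `dist(p₁, p₂)`; in particular the infimum restricted to rational
intermediate terms equals the unrestricted exp-edit distance. -/
theorem min_seq_rat {α : Type*} [DecidableEq α]
    (wdel wins : α → ℝ) (wsub : α → α → ℝ)
    (hdel : ∀ a, 0 < wdel a) (hins : ∀ a, 0 < wins a)
    (hsub0 : ∀ a, wsub a a = 0) (hsubpos : ∀ a b, a ≠ b → 0 < wsub a b)
    (htri₁ : ∀ a b c, wsub a c ≤ wsub a b + wsub b c)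
    (htri₂ : ∀ a b, wsub a b ≤ wdel a + wins b)
    (htri₃ : ∀ a b, wins b ≤ wins a + wsub a b)
    (htri₄ : ∀ a b, wdel a ≤ wsub a b + wdel b)
    (p₁ p₂ : List (α × ℝ)) (h₁ : RES p₁) (h₂ : RES p₂)
    (hq₁ : RatExp p₁) (hq₂ : RatExp p₂) :
    EditCostIn RatExp wdel wins wsub p₁ p₂ (eDist wdel wins wsub p₁ p₂) ∧
    sInf {c | EditCostIn RatExp wdel wins wsub p₁ p₂ c} =
      eDist wdel wins wsub p₁ p₂ :=
  min_seq_rat_general wdel wins wsub hdel hins hsub0 hsubpos htri₁ htri₃ htri₄ p₁ p₂ h₁ h₂ hq₁ hq₂
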